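/- For the standard n-dimensional space V_n = K^n with the standard inner product ⟨x_i, x_j⟩ = δ_{ij}, the pairing β_c(z_{c'}) = δ_{c,c'} holds for all chord diagrams c, c' on {1,...,2N} when n ≥ N, where β_c is the product of inner-product contractions along the pairs of c and z_c is the tensor obtained by placing x_1⊗x_1, ..., x_N⊗x_N into the slot positions determined by c'. -/

import Mathlib

/-- A chord diagram on `{1,…,2N}`: a list of `N` (ordered representatives of) pairs
such that every element of `Fin (2*N)` occurs in exactly one pair at exactly one spot. -/
structure ChordDiagram (N : ℕ) where
  pair : Fin N → Fin (2 * N) × Fin (2 * N)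
  bij : Function.Bijective
    (fun p : Fin N × Bool => if p.2 then (pair p.1).1 else (pair p.1).2)

def ChordDiagram.toPairset {N : ℕ} (c : ChordDiagram N) : Finset (Finset (Fin (2 * N))) :=
  Finset.image (fun r => ({(c.pair r).1, (c.pair r).2} : Finset (Fin (2 * N)))) Finset.univ

/-- `β_c(v₁ ⊗ ⋯ ⊗ v_{2N}) = ∏_r ⟨v_{i_r}, v_{j_r}⟩` for the standard inner product on
`V_n = K^n`. -/
def betaFun {K : Type*} [Field K] {N n : ℕ} (c : ChordDiagram N)
    (v : Fin (2 * N) → (Fin n → K)) : K :=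
  ∏ r : Fin N, ∑ i : Fin n, v (c.pair r).1 i * v (c.pair r).2 i

/-!
Evaluating `β_c` on a tuple of standard basis vectors `x_{f(1)}, …, x_{f(2N)}` gives `1` if
`f` takes equal values at the two ends of every chord of `c`, and `0` otherwise. For `z_{c'}`
the labelling `f` is constant exactly on the chords of `c'`, so the condition says that every
chord of `c` is a chord of `c'`; both diagrams have `N` chords, so their
partitions coincide.
-/

open Finset

namespace ChordDiagram

variable {N : ℕ} (c : ChordDiagram N)

def endpoint (p : Fin N × Bool) : Fin (2 * N) :=
  if p.2 then (c.pair p.1).1 else (c.pair p.1).2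

lemma endpoint_bijective : Function.Bijective c.endpoint := c.bij

def chord (r : Fin N) : Finset (Fin (2 * N)) :=
  {(c.pair r).1, (c.pair r).2}

lemma fst_mem_chord (r : Fin N) : (c.pair r).1 ∈ c.chord r := mem_insert_self _ _

lemma snd_mem_chord (r : Fin N) : (c.pair r).2 ∈ c.chord r :=
  mem_insert_of_mem (mem_singleton_self _)

lemma toPairset_eq_image_chord : c.toPairset = univ.image c.chord := rfl

lemma mem_toPairset {s : Finset (Fin (2 * N))} : s ∈ c.toPairset ↔ ∃ r, c.chord r = s := by
  simp [toPairset_eq_image_chord]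

lemma mem_chord_iff {i : Fin (2 * N)} {r : Fin N} :
    i ∈ c.chord r ↔ ∃ b, c.endpoint (r, b) = i := by
  simp [chord, endpoint, eq_comm, or_comm]

lemma fst_ne_snd (r : Fin N) : (c.pair r).1 ≠ (c.pair r).2 := fun h => by
  simpa using c.endpoint_bijective.injective (a₁ := (r, true)) (a₂ := (r, false)) h

lemma card_chord (r : Fin N) : (c.chord r).card = 2 := card_pair (c.fst_ne_snd r)

lemma exists_mem_chord (i : Fin (2 * N)) : ∃ r, i ∈ c.chord r := by
  obtain ⟨⟨r, b⟩, h⟩ := c.endpoint_bijective.surjective i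
  exact ⟨r, c.mem_chord_iff.2 ⟨b, h⟩⟩

lemma eq_of_mem_chord {i : Fin (2 * N)} {r s : Fin N} (hr : i ∈ c.chord r)
    (hs : i ∈ c.chord s) : r = s := by
  obtain ⟨b, rfl⟩ := c.mem_chord_iff.1 hr
  obtain ⟨b', h⟩ := c.mem_chord_iff.1 hs
  exact congrArg Prod.fst (c.endpoint_bijective.injective h).symm

lemma chord_injective : Function.Injective c.chord := fun r _ h =>
  c.eq_of_mem_chord (c.fst_mem_chord r) (h ▸ c.fst_mem_chord r)

lemma card_toPairset : c.toPairset.card = N := by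
  rw [toPairset_eq_image_chord, card_image_of_injective _ c.chord_injective, card_univ,
    Fintype.card_fin]

section Labelling

variable {slot : Fin (2 * N) → Fin N}

lemma slot_eq_iff_mem_chord (h1 : ∀ r, slot (c.pair r).1 = r) (h2 : ∀ r, slot (c.pair r).2 = r)
    {i : Fin (2 * N)} {r : Fin N} : slot i = r ↔ i ∈ c.chord r := by
  have mem_slot : ∀ {i s}, i ∈ c.chord s → slot i = s := fun hi => by
    rcases mem_insert.1 hi with rfl | hi
    · exact h1 _
    · rw [mem_singleton.1 hi, h2]
  refine ⟨fun h => ?_, mem_slot⟩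
  obtain ⟨s, hs⟩ := c.exists_mem_chord i
  rwa [← h, mem_slot hs]

lemma toPairset_eq_iff (c' : ChordDiagram N) (h1 : ∀ r, slot (c'.pair r).1 = r)
    (h2 : ∀ r, slot (c'.pair r).2 = r) :
    c.toPairset = c'.toPairset ↔ ∀ r, slot (c.pair r).1 = slot (c.pair r).2 := by
  constructor
  · intro h r
    obtain ⟨r', hr'⟩ := c'.mem_toPairset.1 (h ▸ c.mem_toPairset.2 ⟨r, rfl⟩)
    rw [(c'.slot_eq_iff_mem_chord h1 h2).2 (hr' ▸ c.fst_mem_chord r),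
      (c'.slot_eq_iff_mem_chord h1 h2).2 (hr' ▸ c.snd_mem_chord r)]
  · intro h
    have chord_eq : ∀ r, c.chord r = c'.chord (slot (c.pair r).1) := fun r =>
      eq_of_subset_of_card_le
        (fun i hi => (c'.slot_eq_iff_mem_chord h1 h2).1 <| by
          rcases mem_insert.1 hi with rfl | hi
          · rfl
          · rw [mem_singleton.1 hi, h])
        (by rw [card_chord, card_chord])
    refine eq_of_subset_of_card_le (fun s hs => ?_) (by rw [card_toPairset, card_toPairset])
    obtain ⟨r, rfl⟩ := c.mem_toPairset.1 hs
    exact c'.mem_toPairset.2 ⟨_, (chord_eq r).symm⟩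

end Labelling

end ChordDiagram

lemma betaFun_single {K : Type*} [Field K] {N n : ℕ} (c : ChordDiagram N)
    (f : Fin (2 * N) → Fin n) :
    betaFun c (fun i => (Pi.single (f i) 1 : Fin n → K))
      = if ∀ r, f (c.pair r).1 = f (c.pair r).2 then 1 else 0 := by
  have factor : ∀ a b : Fin n,
      ∑ i, (Pi.single a 1 : Fin n → K) i * (Pi.single b 1 : Fin n → K) i
        = if a = b then 1 else 0 := fun a b => by
    rw [← dotProduct, single_dotProduct, one_mul, Pi.single_apply]
  simp only [betaFun, factor, prod_boole, mem_univ, true_implies]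

theorem stmt_2_general {K : Type*} [Field K] {N n : ℕ} (hn : N ≤ n)
    (c c' : ChordDiagram N) (slot' : Fin (2 * N) → Fin N)
    (h1 : ∀ r, slot' (c'.pair r).1 = r) (h2 : ∀ r, slot' (c'.pair r).2 = r) :
    betaFun c (fun i => (Pi.single (Fin.castLE hn (slot' i)) 1 : Fin n → K))
      = (if c.toPairset = c'.toPairset then 1 else 0) := by
  rw [betaFun_single]
  simp only [(Fin.castLE_injective hn).eq_iff, c.toPairset_eq_iff c' h1 h2]

/-- for `n ≥ N`, `β_c(z_{c'}) = δ_{c,c'}`, where `z_{c'}` is the tuple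
placing `x_r` (the `r`-th standard basis vector) in both slots of the `r`-th pair of
`c'`, and equality of chord diagrams means equality of the underlying partitions. -/
theorem stmt_2 {K : Type*} [Field K] [CharZero K] {N n : ℕ} (hn : N ≤ n)
    (c c' : ChordDiagram N) (slot' : Fin (2 * N) → Fin N)
    (h1 : ∀ r, slot' (c'.pair r).1 = r) (h2 : ∀ r, slot' (c'.pair r).2 = r) :
    betaFun c (fun i => (Pi.single (Fin.castLE hn (slot' i)) 1 : Fin n → K))
      = (if c.toPairset = c'.toPairset then 1 else 0) :=
  stmt_2_general hn c c' slot' h1 h2
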